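/- arXiv:2104.07796 — 5 statements merged into one kernel-verified Lean document; each statement's English description precedes it below -/
import Mathlib

section
/- Let f : ℝⁿ → ℝ be ℓ-weakly convex and L-smooth, i.e., −(ℓ/2)‖y−x‖² ≤ f(y) − f(x) − ⟨∇f(x), y−x⟩ ≤ (L/2)‖y−x‖² for all x, y. Then for any points x, u, w and any α ∈ (0,1), setting z = w + α(u − w), we have f(z) − [(1−α)f(w) + α f(x)] ≤ ⟨∇f(z), z − αx − (1−α)w⟩ + (ℓα/2)‖z − x‖² + (ℓα²(1−α)/2)‖w − u‖². -/
open RealInnerProductSpace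

/-- For an ℓ-weakly convex, L-smooth f with gradient g, and z = (1−α)w + αu:
f(z) − [(1−α)f(w) + αf(x)] ≤ ⟨∇f(z), z − αx − (1−α)w⟩ + (ℓα/2)‖z−x‖² + (ℓα²(1−α)/2)‖w−u‖². -/
theorem stmt3 {E : Type*} [NormedAddCommGroup E] [InnerProductSpace ℝ E] [CompleteSpace E]
    (f : E → ℝ) (g : E → E) (ℓ L : ℝ) (hℓ : 0 ≤ ℓ) (hL : 0 ≤ L)
    (hgrad : ∀ x, HasGradientAt f (g x) x)
    (hsmooth : ∀ x y : E, -(ℓ / 2) * ‖y - x‖ ^ 2 ≤ f y - f x - ⟪g x, y - x⟫ ∧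
      f y - f x - ⟪g x, y - x⟫ ≤ (L / 2) * ‖y - x‖ ^ 2)
    (α : ℝ) (hα : α ∈ Set.Ioo (0 : ℝ) 1)
    (w u z x : E) (hz : z = (1 - α) • w + α • u) :
    f z - ((1 - α) * f w + α * f x) ≤
      ⟪g z, z - α • x - (1 - α) • w⟫ + (ℓ * α / 2) * ‖z - x‖ ^ 2
        + (ℓ * α ^ 2 * (1 - α) / 2) * ‖w - u‖ ^ 2 := by
  obtain ⟨hα0, hα1⟩ := hα
  have h1 := (hsmooth z w).1
  have h2 := (hsmooth z x).1
  have hwz : w - z = α • (w - u) := by rw [hz]; module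
  have hnwz : ‖w - z‖ ^ 2 = α ^ 2 * ‖w - u‖ ^ 2 := by
    rw [hwz, norm_smul]
    simp [mul_pow, abs_of_pos hα0]
  have hxz : ‖x - z‖ = ‖z - x‖ := norm_sub_rev _ _
  have hinner : ⟪g z, z - α • x - (1 - α) • w⟫ =
      -((1 - α) * ⟪g z, w - z⟫) - α * ⟪g z, x - z⟫ := by
    have h : z - α • x - (1 - α) • w = -((1 - α) • (w - z)) + -(α • (x - z)) := by module
    rw [h, inner_add_right, inner_neg_right, inner_neg_right, inner_smul_right,
      inner_smul_right]
    ring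
  rw [hnwz] at h1
  rw [hxz] at h2
  rw [hinner]
  nlinarith [mul_le_mul_of_nonneg_left h1 (by linarith : (0:ℝ) ≤ 1 - α),
    mul_le_mul_of_nonneg_left h2 (le_of_lt hα0)]
end

section
/- Let X ⊆ ℝⁿ be convex, φ_i : ℝⁿ → ℝ convex for i = 1,…,m, and x° ∈ X with φ_i(x°) < 0 for all i. Let x̂ ∈ X and set κ = max_i [φ_i(x̂)]₊ / ([φ_i(x̂)]₊ − φ_i(x°)) (with κ = 0 if all [φ_i(x̂)]₊ = 0). Then κ ∈ [0,1] and the point x̃ = κ x° + (1−κ) x̂ satisfies x̃ ∈ X and φ_i(x̃) ≤ 0 for all i. -/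
/-- Feasibility restoration: the convex combination x̃ = κx° + (1−κ)x̂ with
κ = max_i [φ_i(x̂)]₊/([φ_i(x̂)]₊ − φ_i(x°)) is feasible. -/
theorem stmt9 {E : Type*} [NormedAddCommGroup E] [NormedSpace ℝ E]
    {m : ℕ} (hm : 0 < m) (X : Set E) (hX : Convex ℝ X)
    (φ : Fin m → E → ℝ) (hφ : ∀ i, ConvexOn ℝ Set.univ (φ i))
    (xo : E) (hxo : xo ∈ X) (hslater : ∀ i, φ i xo < 0)
    (xhat : E) (hxhat : xhat ∈ X)
    (κ : ℝ)
    (hκ : haveI : Nonempty (Fin m) := ⟨⟨0, hm⟩⟩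
      κ = Finset.univ.sup' Finset.univ_nonempty
        (fun i => max (φ i xhat) 0 / (max (φ i xhat) 0 - φ i xo))) :
    κ ∈ Set.Icc (0 : ℝ) 1 ∧ κ • xo + (1 - κ) • xhat ∈ X ∧
      ∀ i, φ i (κ • xo + (1 - κ) • xhat) ≤ 0 := by
  haveI : Nonempty (Fin m) := ⟨⟨0, hm⟩⟩
  set t : Fin m → ℝ := fun i => max (φ i xhat) 0 / (max (φ i xhat) 0 - φ i xo) with ht
  have hd : ∀ i, 0 < max (φ i xhat) 0 - φ i xo := fun i => by
    have := hslater i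
    have : (0:ℝ) ≤ max (φ i xhat) 0 := le_max_right _ _
    linarith [hslater i]
  have ht0 : ∀ i, 0 ≤ t i := fun i =>
    div_nonneg (le_max_right _ _) (hd i).le
  have ht1 : ∀ i, t i ≤ 1 := fun i => by
    rw [div_le_one (hd i)]
    linarith [hslater i]
  have hκ0 : 0 ≤ κ := hκ ▸ le_trans (ht0 ⟨0, hm⟩)
    (Finset.le_sup' _ (Finset.mem_univ _))
  have hκ1 : κ ≤ 1 := hκ ▸ Finset.sup'_le _ _ fun i _ => ht1 i
  have hκi : ∀ i, t i ≤ κ := fun i => hκ ▸ Finset.le_sup' _ (Finset.mem_univ i)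
  refine ⟨⟨hκ0, hκ1⟩, hX hxo hxhat hκ0 (by linarith) (by ring), fun i => ?_⟩
  have hcx := (hφ i).2 (Set.mem_univ xo) (Set.mem_univ xhat) hκ0
    (by linarith : (0:ℝ) ≤ 1 - κ) (by ring)
  simp only [smul_eq_mul] at hcx
  refine hcx.trans ?_
  have hle : max (φ i xhat) 0 ≤ κ * (max (φ i xhat) 0 - φ i xo) := by
    have := hκi i
    rw [ht, div_le_iff₀ (hd i)] at this
    simpa using this
  have hφle : φ i xhat ≤ max (φ i xhat) 0 := le_max_left _ _
  nlinarith [hslater i, hκ0, hκ1, mul_nonneg (by linarith : (0:ℝ) ≤ 1 - κ) (by linarith : (0:ℝ) ≤ max (φ i xhat) 0 - φ i xhat)]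
end

section
/- Let X ⊆ ℝⁿ be convex, φ_i convex, x° a Slater point (φ_i(x°) < 0 for all i), and x̂ ∈ X an ε-suboptimal and ε-infeasible solution of min_{u∈X, φ_i(u)≤0} (1/(2γ))‖u − y‖², i.e., |(1/(2γ))‖x̂−y‖² − (1/(2γ))‖x*−y‖²| ≤ ε and [φ_i(x̂)]₊ ≤ ε, where x* is the optimizer. Then x̃ = κx° + (1−κ)x̂ with κ = max_i [φ_i(x̂)]₊/([φ_i(x̂)]₊ − φ_i(x°)) is feasible and satisfies (1/(2γ))‖x̃−y‖² − (1/(2γ))‖x*−y‖² ≤ (κ²/(2γ))‖x°−y‖² + (κ(1−κ)/γ)‖x°−y‖·‖x̂−y‖ + ε. -/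
/-!
Since `φ i xo < 0`, the ratio `[φ i xhat]₊ / ([φ i xhat]₊ - φ i xo)` lies in `[0, 1]`, and moving
from `xhat` towards the Slater point by any fraction `κ` at least this ratio makes the convex
bound `κ φ i xo + (1 - κ) φ i xhat` nonpositive; taking the largest ratio handles every
constraint at once. For the objective, the triangle inequality gives
`‖x̃ - y‖ ≤ κ ‖xo - y‖ + (1 - κ) ‖xhat - y‖`; squaring and bounding `(1 - κ)²` by `1` leaves
`‖xhat - y‖²`, whose excess over the optimal value is at most `ε`.
-/

open Set

lemma div_sub_mem_Icc_of_neg {p a : ℝ} (hp : 0 ≤ p) (ha : a < 0) :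
    p / (p - a) ∈ Icc (0 : ℝ) 1 :=
  ⟨div_nonneg hp (by linarith), (div_le_one (by linarith)).2 (by linarith)⟩

lemma ConvexOn.map_convexComb_nonpos {E : Type*} [AddCommGroup E] [Module ℝ E]
    {s : Set E} {f : E → ℝ} (hf : ConvexOn ℝ s f) {xo x : E} (hxo : xo ∈ s) (hx : x ∈ s)
    (hneg : f xo < 0) {κ : ℝ} (hκ : max (f x) 0 / (max (f x) 0 - f xo) ≤ κ) (hκ1 : κ ≤ 1) :
    f (κ • xo + (1 - κ) • x) ≤ 0 := by
  set p := max (f x) 0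
  have hgap : 0 < p - f xo := by linarith [le_max_right (f x) 0]
  have hκ0 : 0 ≤ κ := (div_sub_mem_Icc_of_neg (le_max_right (f x) 0) hneg).1.trans hκ
  have hpκ : p ≤ κ * (p - f xo) := (div_le_iff₀ hgap).1 hκ
  calc f (κ • xo + (1 - κ) • x) ≤ κ * f xo + (1 - κ) * f x :=
        hf.2 hxo hx hκ0 (by linarith) (by ring)
    _ ≤ κ * f xo + (1 - κ) * p := by
        gcongr
        exact le_max_left _ _
    _ ≤ 0 := by linarith

lemma norm_convexComb_sub_le {E : Type*} [SeminormedAddCommGroup E] [NormedSpace ℝ E]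
    (a b y : E) {κ : ℝ} (hκ0 : 0 ≤ κ) (hκ1 : κ ≤ 1) :
    ‖κ • a + (1 - κ) • b - y‖ ≤ κ * ‖a - y‖ + (1 - κ) * ‖b - y‖ := by
  have hsplit : κ • a + (1 - κ) • b - y = κ • (a - y) + (1 - κ) • (b - y) := by module
  calc ‖κ • a + (1 - κ) • b - y‖ ≤ ‖κ • (a - y)‖ + ‖(1 - κ) • (b - y)‖ :=
        hsplit ▸ norm_add_le _ _
    _ = κ * ‖a - y‖ + (1 - κ) * ‖b - y‖ := by
        rw [norm_smul_of_nonneg hκ0, norm_smul_of_nonneg (sub_nonneg.2 hκ1)]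

lemma sq_norm_convexComb_sub_le {E : Type*} [SeminormedAddCommGroup E] [NormedSpace ℝ E]
    (a b y : E) {κ : ℝ} (hκ0 : 0 ≤ κ) (hκ1 : κ ≤ 1) :
    ‖κ • a + (1 - κ) • b - y‖ ^ 2 ≤
      κ ^ 2 * ‖a - y‖ ^ 2 + 2 * κ * (1 - κ) * ‖a - y‖ * ‖b - y‖ + ‖b - y‖ ^ 2 := by
  have hnorm := norm_convexComb_sub_le a b y hκ0 hκ1
  have hsq : (1 - κ) ^ 2 ≤ 1 := by nlinarith
  calc ‖κ • a + (1 - κ) • b - y‖ ^ 2 ≤ (κ * ‖a - y‖ + (1 - κ) * ‖b - y‖) ^ 2 := by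
        gcongr
    _ = κ ^ 2 * ‖a - y‖ ^ 2 + 2 * κ * (1 - κ) * ‖a - y‖ * ‖b - y‖
          + (1 - κ) ^ 2 * ‖b - y‖ ^ 2 := by ring
    _ ≤ _ := by gcongr; nlinarith [sq_nonneg ‖b - y‖]

theorem stmt11_general {E : Type*} [NormedAddCommGroup E] [InnerProductSpace ℝ E]
    {m : ℕ} (hm : 0 < m) (X : Set E) (hX : Convex ℝ X)
    (φ : Fin m → E → ℝ) (hφ : ∀ i, ConvexOn ℝ Set.univ (φ i))
    (xo : E) (hxo : xo ∈ X) (hslater : ∀ i, φ i xo < 0)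
    (γ ε : ℝ) (hγ : 0 < γ) (y : E)
    (xstar : E)
    (xhat : E) (hxhatX : xhat ∈ X)
    (hsubopt : |(1 / (2 * γ)) * ‖xhat - y‖ ^ 2 - (1 / (2 * γ)) * ‖xstar - y‖ ^ 2| ≤ ε)
    (κ : ℝ)
    (hκ : haveI : Nonempty (Fin m) := ⟨⟨0, hm⟩⟩
      κ = Finset.univ.sup' Finset.univ_nonempty
        (fun i => max (φ i xhat) 0 / (max (φ i xhat) 0 - φ i xo))) :
    (κ • xo + (1 - κ) • xhat ∈ X ∧ ∀ i, φ i (κ • xo + (1 - κ) • xhat) ≤ 0) ∧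
    (1 / (2 * γ)) * ‖(κ • xo + (1 - κ) • xhat) - y‖ ^ 2
        - (1 / (2 * γ)) * ‖xstar - y‖ ^ 2 ≤
      (κ ^ 2 / (2 * γ)) * ‖xo - y‖ ^ 2
        + (κ * (1 - κ) / γ) * ‖xo - y‖ * ‖xhat - y‖ + ε := by
  have hratio i := div_sub_mem_Icc_of_neg (le_max_right (φ i xhat) 0) (hslater i)
  set ratio := fun i ↦ max (φ i xhat) 0 / (max (φ i xhat) 0 - φ i xo)
  have hκi : ∀ i, ratio i ≤ κ := fun i ↦ hκ ▸ Finset.le_sup' ratio (Finset.mem_univ i)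
  have hκ0 : 0 ≤ κ := (hratio ⟨0, hm⟩).1.trans (hκi ⟨0, hm⟩)
  have hκ1 : κ ≤ 1 := hκ ▸ Finset.sup'_le _ _ fun i _ ↦ (hratio i).2
  refine ⟨⟨hX hxo hxhatX hκ0 (sub_nonneg.2 hκ1) (by ring), fun i ↦
    (hφ i).map_convexComb_nonpos (mem_univ _) (mem_univ _) (hslater i) (hκi i) hκ1⟩, ?_⟩
  have hnorm := mul_le_mul_of_nonneg_left (sq_norm_convexComb_sub_le xo xhat y hκ0 hκ1)
    (by positivity : (0 : ℝ) ≤ 1 / (2 * γ))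
  have hexcess := (le_abs_self _).trans hsubopt
  have hexpand : 1 / (2 * γ) * (κ ^ 2 * ‖xo - y‖ ^ 2 + 2 * κ * (1 - κ) * ‖xo - y‖ * ‖xhat - y‖
      + ‖xhat - y‖ ^ 2) = κ ^ 2 / (2 * γ) * ‖xo - y‖ ^ 2
        + κ * (1 - κ) / γ * ‖xo - y‖ * ‖xhat - y‖ + 1 / (2 * γ) * ‖xhat - y‖ ^ 2 := by
    field_simp
  linarith

/-- Lemma 6 (feasibility-restoration): x̃ = κx° + (1−κ)x̂ is feasible and nearly optimal
for the projection subproblem. -/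
theorem stmt11 {E : Type*} [NormedAddCommGroup E] [InnerProductSpace ℝ E]
    {m : ℕ} (hm : 0 < m) (X : Set E) (hX : Convex ℝ X)
    (φ : Fin m → E → ℝ) (hφ : ∀ i, ConvexOn ℝ Set.univ (φ i))
    (xo : E) (hxo : xo ∈ X) (hslater : ∀ i, φ i xo < 0)
    (γ ε : ℝ) (hγ : 0 < γ) (hε : 0 ≤ ε) (y : E)
    (xstar : E) (hxstarX : xstar ∈ X) (hxstarfeas : ∀ i, φ i xstar ≤ 0)
    (hxstaropt : ∀ u ∈ X, (∀ i, φ i u ≤ 0) →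
      (1 / (2 * γ)) * ‖xstar - y‖ ^ 2 ≤ (1 / (2 * γ)) * ‖u - y‖ ^ 2)
    (xhat : E) (hxhatX : xhat ∈ X)
    (hsubopt : |(1 / (2 * γ)) * ‖xhat - y‖ ^ 2 - (1 / (2 * γ)) * ‖xstar - y‖ ^ 2| ≤ ε)
    (hinfeas : ∀ i, max (φ i xhat) 0 ≤ ε)
    (κ : ℝ)
    (hκ : haveI : Nonempty (Fin m) := ⟨⟨0, hm⟩⟩
      κ = Finset.univ.sup' Finset.univ_nonempty
        (fun i => max (φ i xhat) 0 / (max (φ i xhat) 0 - φ i xo))) :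
    (κ • xo + (1 - κ) • xhat ∈ X ∧ ∀ i, φ i (κ • xo + (1 - κ) • xhat) ≤ 0) ∧
    (1 / (2 * γ)) * ‖(κ • xo + (1 - κ) • xhat) - y‖ ^ 2
        - (1 / (2 * γ)) * ‖xstar - y‖ ^ 2 ≤
      (κ ^ 2 / (2 * γ)) * ‖xo - y‖ ^ 2
        + (κ * (1 - κ) / γ) * ‖xo - y‖ * ‖xhat - y‖ + ε :=
  stmt11_general hm X hX φ hφ xo hxo hslater γ ε hγ y xstar xhat hxhatX hsubopt κ hκ
end

section
/- Let f be L-smooth, h convex, λ = 1/(2L), and let ŷ = prox_{λh}(z − λ∇f(z)) for a point z. If ‖ŷ − z‖ ≤ √ε, then there exists d ∈ ∂h(ŷ) with ‖∇f(ŷ) + d‖ ≤ 3L√ε; i.e., 0 ∈ ∇f(ŷ) + ∂h(ŷ) + B(3L√ε). -/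
open RealInnerProductSpace Set Filter Topology

/-
Optimality of the prox point says that `ŷ` minimises `h + φ` with `φ u = ‖u - c‖² / (2λ)`,
`c = z - λ∇f(z)`. Comparing `ŷ` with the points of the segment towards any `u` and letting them
tend to `ŷ` shows that `-∇φ(ŷ) = (c - ŷ)/λ` is a subgradient of `h` at `ŷ`. Then
`∇f(ŷ) + (c - ŷ)/λ = (∇f(ŷ) - ∇f(z)) + (z - ŷ)/λ`, whose norm is at most
`(L + 1/λ)‖ŷ - z‖ = 3L‖ŷ - z‖`.
-/

theorem ConvexOn.sub_fderiv_le_of_isMinOn_add {E : Type*} [NormedAddCommGroup E]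
    [NormedSpace ℝ E] {h φ : E → ℝ} {φ' : E →L[ℝ] ℝ} {x : E} (hh : ConvexOn ℝ univ h)
    (hφ : HasFDerivAt φ φ' x) (hmin : IsMinOn (h + φ) univ x) (u : E) :
    h x - φ' (u - x) ≤ h u := by
  set v := u - x
  have hline : HasDerivAt (fun t : ℝ => φ (x + t • v)) (φ' v) 0 := by
    have hseg : HasDerivAt (fun t : ℝ => x + t • v) v 0 := by
      simpa using ((hasDerivAt_id (0 : ℝ)).smul_const v).const_add x
    exact (by simpa using hφ : HasFDerivAt φ φ' (x + (0 : ℝ) • v)).comp_hasDerivAt 0 hseg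
  have hslope : ∀ t ∈ Ioc (0 : ℝ) 1, h x - h u ≤ t⁻¹ * (φ (x + t • v) - φ x) := by
    rintro t ⟨ht0, ht1⟩
    have hconv : h (x + t • v) ≤ (1 - t) * h x + t * h u := by
      have hpt : (1 - t) • x + t • u = x + t • v := by
        simp only [v, smul_sub, sub_smul, one_smul]; abel
      simpa [hpt] using hh.2 (mem_univ x) (mem_univ u) (sub_nonneg.mpr ht1) ht0.le (sub_add_cancel 1 t)
    have hle := isMinOn_univ_iff.mp hmin (x + t • v)
    simp only [Pi.add_apply] at hle
    rw [le_inv_mul_iff₀ ht0]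
    linarith
  refine le_of_sub_nonneg ?_
  have hlim := hline.tendsto_slope_zero_right
  simp only [zero_add, zero_smul, add_zero, smul_eq_mul] at hlim
  linarith [ge_of_tendsto hlim (eventually_of_mem (Ioc_mem_nhdsGT one_pos) hslope)]

section Prox

variable {E : Type*} [NormedAddCommGroup E] [InnerProductSpace ℝ E]

/-- `y = prox_{λh}(c)`. -/
def IsProxPoint (h : E → ℝ) (lam : ℝ) (c y : E) : Prop :=
  ∀ u : E, h y + 1 / (2 * lam) * ‖y - c‖ ^ 2 ≤ h u + 1 / (2 * lam) * ‖u - c‖ ^ 2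

theorem ConvexOn.add_inner_le_of_isProxPoint {h : E → ℝ} {lam : ℝ} {c y : E}
    (hh : ConvexOn ℝ univ h) (hprox : IsProxPoint h lam c y) (u : E) :
    h y + ⟪lam⁻¹ • (c - y), u - y⟫ ≤ h u := by
  have hφ := (((hasFDerivAt_id y).sub_const c).norm_sq).const_mul (1 / (2 * lam))
  have hsub := hh.sub_fderiv_le_of_isMinOn_add hφ (isMinOn_univ_iff.mpr hprox) u
  have hinner : ⟪lam⁻¹ • (c - y), u - y⟫ = -(1 / (2 * lam) * (2 * ⟪y - c, u - y⟫)) := by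
    rw [real_inner_smul_left, ← neg_sub y c, inner_neg_left]
    field_simp
  simp only [smul_apply, id_eq, ContinuousLinearMap.comp_apply,
    ContinuousLinearMap.id_apply, innerSL_apply_apply, smul_eq_mul, nsmul_eq_mul,
    Nat.cast_ofNat] at hsub
  linarith

theorem norm_add_inv_smul_sub_le {g : E → E} {L lam : ℝ}
    (hlip : ∀ x y : E, ‖g x - g y‖ ≤ L * ‖x - y‖) (hlam : lam ≠ 0) (y z : E) :
    ‖g y + lam⁻¹ • (z - lam • g z - y)‖ ≤ (L + |lam|⁻¹) * ‖y - z‖ := by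
  have hsplit : g y + lam⁻¹ • (z - lam • g z - y) = (g y - g z) + lam⁻¹ • (z - y) := by
    rw [sub_right_comm, smul_sub, smul_smul, inv_mul_cancel₀ hlam, one_smul]
    abel
  calc ‖g y + lam⁻¹ • (z - lam • g z - y)‖
      ≤ ‖g y - g z‖ + ‖lam⁻¹ • (z - y)‖ := hsplit ▸ norm_add_le _ _
    _ ≤ L * ‖y - z‖ + |lam|⁻¹ * ‖y - z‖ := by
      rw [norm_smul, norm_inv, Real.norm_eq_abs, norm_sub_rev z y]
      gcongr
      exact hlip y z
    _ = (L + |lam|⁻¹) * ‖y - z‖ := by ring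

end Prox

theorem stmt13_general {E : Type*} [NormedAddCommGroup E] [InnerProductSpace ℝ E]
    (g : E → E)
    (L : ℝ) (hL : 0 < L) (hlip : ∀ x y : E, ‖g x - g y‖ ≤ L * ‖x - y‖)
    (h : E → ℝ) (hconv : ConvexOn ℝ Set.univ h)
    (lam : ℝ) (hlam : lam = 1 / (2 * L))
    (ε : ℝ) (z yh : E)
    (hprox : ∀ u : E, h yh + (1 / (2 * lam)) * ‖yh - (z - lam • g z)‖ ^ 2 ≤
      h u + (1 / (2 * lam)) * ‖u - (z - lam • g z)‖ ^ 2)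
    (hclose : ‖yh - z‖ ≤ Real.sqrt ε) :
    ∃ d : E, (∀ u : E, h u ≥ h yh + ⟪d, u - yh⟫) ∧ ‖g yh + d‖ ≤ 3 * L * Real.sqrt ε := by
  have hlam_pos : 0 < lam := by rw [hlam]; positivity
  refine ⟨lam⁻¹ • (z - lam • g z - yh), hconv.add_inner_le_of_isProxPoint hprox, ?_⟩
  calc ‖g yh + lam⁻¹ • (z - lam • g z - yh)‖
      ≤ (L + |lam|⁻¹) * ‖yh - z‖ := norm_add_inv_smul_sub_le hlip hlam_pos.ne' yh z
    _ = 3 * L * ‖yh - z‖ := by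
      rw [abs_of_pos hlam_pos, hlam]
      field_simp
      ring
    _ ≤ 3 * L * Real.sqrt ε := by gcongr

/-- If ŷ = prox_{λh}(z − λ∇f(z)) with λ = 1/(2L) and ‖ŷ − z‖ ≤ √ε, then there is a
subgradient d ∈ ∂h(ŷ) with ‖∇f(ŷ) + d‖ ≤ 3L√ε. -/
theorem stmt13 {E : Type*} [NormedAddCommGroup E] [InnerProductSpace ℝ E] [CompleteSpace E]
    (f : E → ℝ) (g : E → E) (hgrad : ∀ x, HasGradientAt f (g x) x)
    (L : ℝ) (hL : 0 < L) (hlip : ∀ x y : E, ‖g x - g y‖ ≤ L * ‖x - y‖)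
    (h : E → ℝ) (hconv : ConvexOn ℝ Set.univ h)
    (lam : ℝ) (hlam : lam = 1 / (2 * L))
    (ε : ℝ) (hε : 0 ≤ ε) (z yh : E)
    (hprox : ∀ u : E, h yh + (1 / (2 * lam)) * ‖yh - (z - lam • g z)‖ ^ 2 ≤
      h u + (1 / (2 * lam)) * ‖u - (z - lam • g z)‖ ^ 2)
    (hclose : ‖yh - z‖ ≤ Real.sqrt ε) :
    ∃ d : E, (∀ u : E, h u ≥ h yh + ⟪d, u - yh⟫) ∧ ‖g yh + d‖ ≤ 3 * L * Real.sqrt ε :=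
  stmt13_general g L hL hlip h hconv lam hlam ε z yh hprox hclose
end

section
/- Let h be convex and suppose y_k satisfies (1/λ)(z − y_k − λg − w) ∈ ∂_ρ h(y_k) with ‖w‖ ≤ √(2λρ). Then for any points x_k, y_{k−1} and α ∈ [0,1], setting x̄ = αx_k + (1−α)y_{k−1} and using z = (1−α)y_{k−1} + αx_{k−1}: ⟨g, y_k − x̄⟩ + h(y_k) ≤ αh(x_k) + (1−α)h(y_{k−1}) − (1/λ)⟨w, y_k − x̄⟩ + ρ + (1/(2λ))(α²‖x_k − x_{k−1}‖² − ‖y_k − z‖²). -/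
/-! Test the `ρ`-subgradient inequality at `x̄`. Convexity bounds `h x̄`, and the three-point
identity for `⟪z - y_k, x̄ - y_k⟫`, after dropping `‖x̄ - y_k‖² ≥ 0`, leaves the quadratic terms,
with `z - x̄ = α (x_{k-1} - x_k)`. -/

open RealInnerProductSpace

section InnerProductSpace

variable {E : Type*} [NormedAddCommGroup E] [InnerProductSpace ℝ E]

theorem norm_sub_sq_sub_norm_sub_sq_le_two_mul_inner (x y z : E) :
    ‖y - z‖ ^ 2 - ‖z - x‖ ^ 2 ≤ 2 * ⟪z - y, x - y⟫ := by
  have hcos : ‖(z - y) - (x - y)‖ ^ 2 = ‖z - y‖ ^ 2 - 2 * ⟪z - y, x - y⟫ + ‖x - y‖ ^ 2 :=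
    norm_sub_sq_real _ _
  rw [sub_sub_sub_cancel_right] at hcos
  rw [norm_sub_rev y z]
  nlinarith [sq_nonneg ‖x - y‖]

/-- `hsub` says that `y` is an inexact proximal point `prox_{λh}(z - λg)`, up to the error `w`. -/
theorem inner_add_le_of_approx_prox_step {h : E → ℝ} {lam ρ : ℝ} (hlam : 0 < lam)
    {y z g w : E}
    (hsub : ∀ u : E, h u ≥ h y + ⟪(1 / lam) • (z - y - lam • g - w), u - y⟫ - ρ) (x : E) :
    ⟪g, y - x⟫ + h y ≤
      h x - (1 / lam) * ⟪w, y - x⟫ + ρ + (1 / (2 * lam)) * (‖z - x‖ ^ 2 - ‖y - z‖ ^ 2) := by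
  have hx := hsub x
  have hexpand : ⟪(1 / lam) • (z - y - lam • g - w), x - y⟫ =
      (1 / lam) * ⟪z - y, x - y⟫ - ⟪g, x - y⟫ - (1 / lam) * ⟪w, x - y⟫ := by
    simp only [real_inner_smul_left, inner_sub_left]
    field_simp
  have hthreePoint : (1 / (2 * lam)) * (‖y - z‖ ^ 2 - ‖z - x‖ ^ 2) ≤ (1 / lam) * ⟪z - y, x - y⟫ := by
    calc (1 / (2 * lam)) * (‖y - z‖ ^ 2 - ‖z - x‖ ^ 2)
        ≤ (1 / (2 * lam)) * (2 * ⟪z - y, x - y⟫) := by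
          gcongr
          exact norm_sub_sq_sub_norm_sub_sq_le_two_mul_inner x y z
      _ = (1 / lam) * ⟪z - y, x - y⟫ := by field_simp
  rw [← neg_sub x y, inner_neg_right, inner_neg_right]
  linarith

theorem norm_sub_convexCombination_sq (α : ℝ) (x x' y : E) :
    ‖((1 - α) • y + α • x') - (α • x + (1 - α) • y)‖ ^ 2 = α ^ 2 * ‖x - x'‖ ^ 2 := by
  have hdiff : ((1 - α) • y + α • x') - (α • x + (1 - α) • y) = α • (x' - x) := by module
  rw [hdiff, norm_smul, norm_sub_rev, mul_pow, Real.norm_eq_abs, sq_abs]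

end InnerProductSpace

theorem stmt18_general {E : Type*} [NormedAddCommGroup E] [InnerProductSpace ℝ E]
    (h : E → ℝ) (hconv : ConvexOn ℝ Set.univ h)
    (lam ρ : ℝ) (hlam : 0 < lam)
    (yk ykm1 xk xkm1 g w z : E)
    (α : ℝ) (hα : α ∈ Set.Icc (0 : ℝ) 1)
    (hz : z = (1 - α) • ykm1 + α • xkm1)
    (hsub : ∀ u : E, h u ≥ h yk + ⟪(1 / lam) • (z - yk - lam • g - w), u - yk⟫ - ρ) :
    ⟪g, yk - (α • xk + (1 - α) • ykm1)⟫ + h yk ≤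
      α * h xk + (1 - α) * h ykm1
        - (1 / lam) * ⟪w, yk - (α • xk + (1 - α) • ykm1)⟫ + ρ
        + (1 / (2 * lam)) * (α ^ 2 * ‖xk - xkm1‖ ^ 2 - ‖yk - z‖ ^ 2) := by
  subst hz
  have hstep := inner_add_le_of_approx_prox_step hlam hsub (α • xk + (1 - α) • ykm1)
  have hconvex : h (α • xk + (1 - α) • ykm1) ≤ α * h xk + (1 - α) * h ykm1 :=
    hconv.2 (Set.mem_univ xk) (Set.mem_univ ykm1) hα.1 (sub_nonneg.2 hα.2) (add_sub_cancel α 1)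
  rw [norm_sub_convexCombination_sq] at hstep
  linarith

/-- ρ-subgradient inequality for the y-update evaluated at the convex combination
x̄ = αx_k + (1−α)y_{k−1}. -/
theorem stmt18 {E : Type*} [NormedAddCommGroup E] [InnerProductSpace ℝ E]
    (h : E → ℝ) (hconv : ConvexOn ℝ Set.univ h)
    (lam ρ : ℝ) (hlam : 0 < lam) (hρ : 0 ≤ ρ)
    (yk ykm1 xk xkm1 g w z : E)
    (hw : ‖w‖ ≤ Real.sqrt (2 * lam * ρ))
    (α : ℝ) (hα : α ∈ Set.Icc (0 : ℝ) 1)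
    (hz : z = (1 - α) • ykm1 + α • xkm1)
    (hsub : ∀ u : E, h u ≥ h yk + ⟪(1 / lam) • (z - yk - lam • g - w), u - yk⟫ - ρ) :
    ⟪g, yk - (α • xk + (1 - α) • ykm1)⟫ + h yk ≤
      α * h xk + (1 - α) * h ykm1
        - (1 / lam) * ⟪w, yk - (α • xk + (1 - α) • ykm1)⟫ + ρ
        + (1 / (2 * lam)) * (α ^ 2 * ‖xk - xkm1‖ ^ 2 - ‖yk - z‖ ^ 2) :=
  stmt18_general h hconv lam ρ hlam yk ykm1 xk xkm1 g w z α hα hz hsub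
end
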